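/- (A single step of Oblique Matching Pursuit.) Let Ψ, Ψ̃ ∈ K^{m×n}, let x* ∈ K^n be s-sparse with support J*, let z ∈ K^m, y = Ψx* + z, and let J ⊊ J* be a proper subset. Assume θ_{s+1}(Ψ̃*Ψ) < 1 and that ‖Π_{J*\J}x*‖_∞ − 2·θ_{s+1}(Ψ̃*Ψ)·‖Π_{J*\J}x*‖₂ > (‖Ψ_{J*}‖·‖Ψ̃_{J*}‖ / (1 − θ_{s+1}(Ψ̃*Ψ)))·2·(max_{1≤j≤n}‖ψ̃_j‖₂)·‖z‖₂. Set E = I_m − Ψ_J(Ψ̃_J*Ψ_J)^{-1}Ψ̃_J* (with E = I_m when J = ∅). Then max_{j∈J*\J} |⟨ψ̃_j, Ey⟩| > |⟨ψ̃_k, Ey⟩| for every k ∈ {1,…,n}\J*; i.e., the next step of oblique matching pursuit selects an element of J*\J. -/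

import Mathlib

open scoped BigOperators
open Matrix MeasureTheory

noncomputable section

namespace ObliquePursuit

variable {𝕜 : Type*} [RCLike 𝕜]

/-- The Euclidean (`ℓ²`) norm of a finitely indexed vector. -/
def l2 {ι : Type*} [Fintype ι] (x : ι → 𝕜) : ℝ :=
  Real.sqrt (∑ i, ‖x i‖ ^ 2)

/-- The spectral (`ℓ² → ℓ²` operator) norm of a matrix. -/
def specNorm {ι κ : Type*} [Fintype ι] [Fintype κ] [DecidableEq κ]
    (M : Matrix ι κ 𝕜) : ℝ :=
  ‖LinearMap.toContinuousLinearMap (Matrix.toEuclideanLin M)‖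

/-- `x` is `s`-sparse: it has at most `s` nonzero entries. -/
def Sparse {ι : Type*} (s : ℕ) (x : ι → 𝕜) : Prop :=
  ∃ J : Finset ι, J.card ≤ s ∧ ∀ i, x i ≠ 0 → i ∈ J

/-- The `s`-restricted biorthogonality constant `θ_s(M)`: the smallest `δ ≥ 0` such that
`|⟨y, Mx⟩ − ⟨y, x⟩| ≤ δ‖x‖₂‖y‖₂` for all `x, y` supported on a common index set of
cardinality at most `s`. -/
def theta {ι : Type*} [Fintype ι] (s : ℕ) (M : Matrix ι ι 𝕜) : ℝ :=
  sInf {δ : ℝ | 0 ≤ δ ∧ ∀ J : Finset ι, J.card ≤ s →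
    ∀ x y : ι → 𝕜, (∀ i, x i ≠ 0 → i ∈ J) → (∀ i, y i ≠ 0 → i ∈ J) →
      ‖star y ⬝ᵥ M.mulVec x - star y ⬝ᵥ x‖ ≤ δ * l2 x * l2 y}

/-- The `s`-restricted isometry constant `δ_s(Ψ)`. -/
def ric {ι κ : Type*} [Fintype ι] [Fintype κ] (s : ℕ) (Ψ : Matrix ι κ 𝕜) : ℝ :=
  sInf {δ : ℝ | 0 ≤ δ ∧ ∀ x : κ → 𝕜, Sparse s x →
    (1 - δ) * l2 x ^ 2 ≤ l2 (Ψ.mulVec x) ^ 2 ∧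
      l2 (Ψ.mulVec x) ^ 2 ≤ (1 + δ) * l2 x ^ 2}

/-- Coordinate projection `Π_J`: keep the entries indexed by `J`, zero out the others. -/
def proj {ι : Type*} [DecidableEq ι] (J : Finset ι) (x : ι → 𝕜) : ι → 𝕜 :=
  fun i => if i ∈ J then x i else 0

/-- The column submatrix `Ψ_J` of `Ψ` formed by the columns indexed by `J`. -/
def cols {ι κ : Type*} (Ψ : Matrix ι κ 𝕜) (J : Finset κ) :
    Matrix ι {j // j ∈ J} 𝕜 :=
  Ψ.submatrix id fun j => (j : κ)

/-- The `j`-th column of `Ψ`. -/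
def col {ι κ : Type*} (Ψ : Matrix ι κ 𝕜) (j : κ) : ι → 𝕜 :=
  fun i => Ψ i j

/-- The complementary oblique projector `E = I − Ψ_J (Ψ̃_J^* Ψ_J)⁻¹ Ψ̃_J^*`
(equal to `I` when `J = ∅`). -/
def obliqueE {ι κ : Type*} [Fintype ι] [DecidableEq ι] [DecidableEq κ]
    (Ψ Ψt : Matrix ι κ 𝕜) (J : Finset κ) : Matrix ι ι 𝕜 :=
  1 - cols Ψ J * ((cols Ψt J)ᴴ * cols Ψ J)⁻¹ * (cols Ψt J)ᴴ

/-- The smallest (real) eigenvalue of a matrix. -/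
def lamMin {ι : Type*} [Fintype ι] (G : Matrix ι ι 𝕜) : ℝ :=
  sInf {r : ℝ | ∃ v : ι → 𝕜, v ≠ 0 ∧ G.mulVec v = (r : 𝕜) • v}

/-- The `j`-th largest singular value (1-indexed) of a matrix, characterized via the
Eckart–Young–Mirsky theorem: `σ_j(A) = min { ‖A − B‖ : rank B < j }` where `‖·‖` is the
spectral norm. -/
def singVal {ι κ : Type*} [Fintype ι] [Fintype κ] [DecidableEq κ]
    (A : Matrix ι κ 𝕜) (j : ℕ) : ℝ :=
  sInf {r : ℝ | ∃ B : Matrix ι κ 𝕜, B.rank < j ∧ r = specNorm (A - B)}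

/-!
Write `M = Ψ̃*Ψ`, `θ = θ_{s+1}(M)` and `u = Π_{J*\J} x*`. Restricted biorthogonality on `J` makes
the Gram matrix `Ψ̃_J*Ψ_J` invertible with inverse of norm at most `1/(1-θ)`, so the oblique
projector `P = Ψ_J (Ψ̃_J*Ψ_J)⁻¹ Ψ̃_J*` has norm at most `C = ‖Ψ_{J*}‖‖Ψ̃_{J*}‖/(1-θ)`, and `C ≥ 1`
because `1 - θ ≤ |⟨ψ̃_j, ψ_j⟩|`. For an idempotent on a Hilbert space `‖I - P‖ ≤ max 1 ‖P‖`, so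
`E = I - P` moves every correlation with the noise by at most `max_j ‖ψ̃_j‖ · C‖z‖`.
On the signal side `EΨx* = Ψx̃`, where `x̃` agrees with `x*` off `J` and `Mx̃` vanishes on `J`;
testing `θ` on `J ∪ {t}` gives `|⟨ψ̃_t, EΨx*⟩ - x*_t| ≤ θ‖u‖₂` for every `t ∉ J`. So with
`η = θ‖u‖₂ + max_j ‖ψ̃_j‖ · C‖z‖` the correlations off `J*` are at most `η`, the one at the
largest entry of `u` is at least `‖u‖_∞ - η`, and the gap hypothesis says `‖u‖_∞ > 2η`.
-/

open scoped Matrix.Norms.L2Operator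

section L2

variable {ι : Type*} [Fintype ι]

lemma l2_eq_norm (x : ι → 𝕜) : l2 x = ‖WithLp.toLp 2 x‖ := by
  rw [EuclideanSpace.norm_eq]; rfl

lemma l2_nonneg (x : ι → 𝕜) : 0 ≤ l2 x := Real.sqrt_nonneg _

lemma l2_sq (x : ι → 𝕜) : l2 x ^ 2 = ∑ i, ‖x i‖ ^ 2 :=
  Real.sq_sqrt (by positivity)

lemma l2_neg (x : ι → 𝕜) : l2 (-x) = l2 x := by simp [l2]

lemma l2_sub_le (x y : ι → 𝕜) : l2 x - l2 y ≤ l2 (x - y) := by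
  simpa only [l2_eq_norm, WithLp.toLp_sub] using norm_sub_norm_le _ _

lemma l2_eq_zero {x : ι → 𝕜} : l2 x = 0 ↔ x = 0 := by
  rw [l2_eq_norm, norm_eq_zero, WithLp.toLp_eq_zero]

lemma l2_single [DecidableEq ι] (i : ι) : l2 (Pi.single i (1 : 𝕜)) = 1 := by
  simp [l2, Pi.single_apply, apply_ite]

lemma norm_star_dotProduct_le (x y : ι → 𝕜) : ‖star x ⬝ᵥ y‖ ≤ l2 x * l2 y := by
  simpa [l2_eq_norm, EuclideanSpace.inner_toLp_toLp, dotProduct_comm] using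
    norm_inner_le_norm (𝕜 := 𝕜) (WithLp.toLp 2 x) (WithLp.toLp 2 y)

lemma star_dotProduct_self (x : ι → 𝕜) : star x ⬝ᵥ x = ((l2 x ^ 2 : ℝ) : 𝕜) := by
  simp [l2_sq, dotProduct, RCLike.conj_mul]

lemma l2_mulVec_le {κ : Type*} [Fintype κ] [DecidableEq κ] (A : Matrix ι κ 𝕜) (x : κ → 𝕜) :
    l2 (A *ᵥ x) ≤ ‖A‖ * l2 x := by
  simpa [l2_eq_norm] using A.l2_opNorm_mulVec (WithLp.toLp 2 x)

lemma norm_le_of_l2_mulVec_le {κ : Type*} [Fintype κ] [DecidableEq κ] {A : Matrix ι κ 𝕜}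
    {C : ℝ} (hC : 0 ≤ C) (h : ∀ x, l2 (A *ᵥ x) ≤ C * l2 x) : ‖A‖ ≤ C :=
  ContinuousLinearMap.opNorm_le_bound _ hC fun x => by
    have := h x.ofLp
    rwa [l2_eq_norm, l2_eq_norm, WithLp.toLp_ofLp] at this

lemma l2_proj_sq [DecidableEq ι] (T : Finset ι) (x : ι → 𝕜) :
    l2 (proj T x) ^ 2 = ∑ i ∈ T, ‖x i‖ ^ 2 := by
  simp [l2_sq, proj, apply_ite, Finset.sum_ite_mem]

end L2

lemma specNorm_eq_norm {ι κ : Type*} [Fintype ι] [Fintype κ] [DecidableEq κ]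
    (A : Matrix ι κ 𝕜) : specNorm A = ‖A‖ := rfl

section ExtendZero

variable {κ : Type*} [DecidableEq κ]

def extendZero (J : Finset κ) (c : J → 𝕜) : κ → 𝕜 :=
  fun i => if h : i ∈ J then c ⟨i, h⟩ else 0

@[simp]
lemma extendZero_apply_coe {J : Finset κ} (c : J → 𝕜) (j : J) : extendZero J c j = c j :=
  dif_pos j.2

lemma extendZero_apply_of_notMem {J : Finset κ} (c : J → 𝕜) {i : κ} (hi : i ∉ J) :
    extendZero J c i = 0 :=
  dif_neg hi

lemma support_extendZero_subset (J : Finset κ) (c : J → 𝕜) :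
    Function.support (extendZero J c) ⊆ J := fun i hi => by
  by_contra h
  exact hi (extendZero_apply_of_notMem c h)

lemma extendZero_restrict {S : Finset κ} {x : κ → 𝕜} (hx : Function.support x ⊆ S) :
    extendZero S (fun j : S => x j) = x := by
  funext i
  by_cases hi : i ∈ S
  · exact extendZero_apply_coe _ ⟨i, hi⟩
  · rw [extendZero_apply_of_notMem _ hi]
    by_contra h
    exact hi (hx (Ne.symm h))

lemma proj_eq_self {S : Finset κ} {x : κ → 𝕜} (hx : Function.support x ⊆ S) : proj S x = x := by
  funext i
  by_cases hi : i ∈ S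
  · simp [proj, hi]
  · simp only [proj, hi, if_false]
    by_contra h
    exact hi (hx (Ne.symm h))

lemma l2_restrict [Fintype κ] (S : Finset κ) (x : κ → 𝕜) :
    l2 (fun j : S => x j) = l2 (proj S x) := by
  rw [← Real.sqrt_sq (l2_nonneg (proj S x)), l2_proj_sq, ← Finset.sum_coe_sort S]
  rfl

lemma l2_extendZero [Fintype κ] (J : Finset κ) (c : J → 𝕜) : l2 (extendZero J c) = l2 c := by
  have hc : (fun j : J => extendZero J c j) = c := funext (extendZero_apply_coe c)
  rw [← proj_eq_self (support_extendZero_subset J c), ← l2_restrict, hc]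

lemma mulVec_extendZero [Fintype κ] {ι : Type*} (A : Matrix ι κ 𝕜) (J : Finset κ) (c : J → 𝕜) :
    A *ᵥ extendZero J c = cols A J *ᵥ c := by
  funext i
  simp only [mulVec, dotProduct, cols, submatrix_apply, id]
  rw [← Finset.sum_subset (Finset.subset_univ J) fun j _ hj => by
    rw [extendZero_apply_of_notMem c hj, mul_zero], ← Finset.sum_coe_sort J]
  simp

end ExtendZero

section Theta

variable {κ : Type*} [Fintype κ]

lemma theta_nonneg (s : ℕ) (M : Matrix κ κ 𝕜) : 0 ≤ theta s M :=
  Real.sInf_nonneg fun _ hδ => hδ.1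

lemma norm_dotProduct_mulVec_sub_le_theta (s : ℕ) (M : Matrix κ κ 𝕜) {J : Finset κ}
    (hJ : J.card ≤ s) {x y : κ → 𝕜} (hx : Function.support x ⊆ J)
    (hy : Function.support y ⊆ J) :
    ‖star y ⬝ᵥ M *ᵥ x - star y ⬝ᵥ x‖ ≤ theta s M * l2 x * l2 y := by
  classical
  set D := {δ : ℝ | 0 ≤ δ ∧ ∀ J : Finset κ, J.card ≤ s →
    ∀ x y : κ → 𝕜, (∀ i, x i ≠ 0 → i ∈ J) → (∀ i, y i ≠ 0 → i ∈ J) →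
      ‖star y ⬝ᵥ M *ᵥ x - star y ⬝ᵥ x‖ ≤ δ * l2 x * l2 y}
  have hclosed : IsClosed D := by
    simp only [D, Set.ofPred_and, Set.ofPred_forall]
    refine isClosed_Ici.inter ?_
    repeat refine isClosed_iInter fun _ => ?_
    exact isClosed_le continuous_const (by fun_prop)
  have hM : ‖M - 1‖ ∈ D := by
    refine ⟨norm_nonneg _, fun J _ x y _ _ => ?_⟩
    calc ‖star y ⬝ᵥ M *ᵥ x - star y ⬝ᵥ x‖ = ‖star y ⬝ᵥ (M - 1) *ᵥ x‖ := by
          rw [Matrix.sub_mulVec, Matrix.one_mulVec, dotProduct_sub]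
      _ ≤ l2 y * (‖M - 1‖ * l2 x) :=
          (norm_star_dotProduct_le _ _).trans (by gcongr; exacts [l2_nonneg _, l2_mulVec_le _ _])
      _ = ‖M - 1‖ * l2 x * l2 y := by ring
  exact (hclosed.csInf_mem ⟨_, hM⟩ ⟨0, fun _ hδ => hδ.1⟩).2 J hJ x y (fun i hi => hx hi)
    (fun i hi => hy hi)

lemma l2_proj_mulVec_sub_le [DecidableEq κ] (s : ℕ) (M : Matrix κ κ 𝕜) {S T : Finset κ}
    (hTS : T ⊆ S) (hS : S.card ≤ s) {x : κ → 𝕜} (hx : Function.support x ⊆ S) :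
    l2 (proj T (M *ᵥ x - x)) ≤ theta s M * l2 x := by
  set r := proj T (M *ᵥ x - x)
  have hr : Function.support r ⊆ S := fun i hi => hTS <| by
    by_contra hiT
    exact hi (by simp [r, proj, hiT])
  have hrr : star r ⬝ᵥ M *ᵥ x - star r ⬝ᵥ x = star r ⬝ᵥ r := by
    rw [← dotProduct_sub]
    refine Finset.sum_congr rfl fun i _ => ?_
    by_cases hi : i ∈ T <;> simp [r, proj, hi]
  have h := norm_dotProduct_mulVec_sub_le_theta s M hS hx hr
  rw [hrr, star_dotProduct_self, RCLike.norm_ofReal, abs_of_nonneg (by positivity)] at h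
  rcases (l2_nonneg r).eq_or_lt with h0 | h0
  · rw [← h0]; exact mul_nonneg (theta_nonneg s M) (l2_nonneg x)
  · nlinarith


lemma norm_mulVec_apply_sub_le [DecidableEq κ] {s : ℕ} {M : Matrix κ κ 𝕜}
    (hθ : theta (s + 1) M ≤ 1) {S J : Finset κ} (hJS : J ⊆ S) (hS : S.card ≤ s) {x : κ → 𝕜}
    (hx : Function.support x ⊆ S) (hMx : ∀ j ∈ J, (M *ᵥ x) j = 0) {t : κ} (ht : t ∉ J) :
    ‖(M *ᵥ x) t - x t‖ ≤ theta (s + 1) M * l2 (proj (S \ J) x) := by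
  have hθ0 := theta_nonneg (s + 1) M
  -- On `J` the residual `Mx - x` is `-x`, so testing `θ` on `J ∪ {t}` isolates its `t`-entry.
  have hT := l2_proj_mulVec_sub_le (s + 1) M (Finset.insert_subset_insert t hJS)
    ((Finset.card_insert_le t S).trans (by omega))
    (hx.trans (by simp [Set.subset_insert]))
  have hJpart : ∑ i ∈ J, ‖(M *ᵥ x - x) i‖ ^ 2 = l2 (proj J x) ^ 2 := by
    rw [l2_proj_sq]
    exact Finset.sum_congr rfl fun i hi => by simp [hMx i hi]
  rw [← pow_le_pow_iff_left₀ (l2_nonneg _) (mul_nonneg hθ0 (l2_nonneg x)) two_ne_zero, l2_proj_sq,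
    Finset.sum_insert ht, hJpart, mul_pow] at hT
  have hx2 : l2 x ^ 2 = l2 (proj J x) ^ 2 + l2 (proj (S \ J) x) ^ 2 := by
    conv_lhs => rw [← proj_eq_self hx]
    rw [l2_proj_sq, l2_proj_sq, l2_proj_sq, add_comm, Finset.sum_sdiff hJS]
  rw [hx2, Pi.sub_apply] at hT
  refine (pow_le_pow_iff_left₀ (norm_nonneg _) (mul_nonneg hθ0 (l2_nonneg _)) two_ne_zero).mp ?_
  nlinarith [mul_le_mul_of_nonneg_right (pow_le_one₀ (n := 2) hθ0 hθ) (sq_nonneg (l2 (proj J x)))]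

end Theta

section Columns

variable {ι κ : Type*} [Fintype ι]

lemma star_col_dotProduct (A : Matrix ι κ 𝕜) (t : κ) (v : ι → 𝕜) :
    star (col A t) ⬝ᵥ v = (Aᴴ *ᵥ v) t := rfl

lemma conjTranspose_mul_apply_self (Ψ Ψt : Matrix ι κ 𝕜) (j : κ) :
    (Ψtᴴ * Ψ) j j = star (col Ψt j) ⬝ᵥ col Ψ j := rfl

lemma conjTranspose_cols_mul_cols (Ψ Ψt : Matrix ι κ 𝕜) (J : Finset κ) :
    (cols Ψt J)ᴴ * cols Ψ J = (Ψtᴴ * Ψ).submatrix ((↑) : J → κ) ((↑) : J → κ) := by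
  rw [cols, cols, conjTranspose_submatrix, ← submatrix_mul _ _ _ id _ Function.bijective_id]

lemma l2_col_le [DecidableEq κ] (A : Matrix ι κ 𝕜) {S : Finset κ} {j : κ} (hj : j ∈ S) :
    l2 (col A j) ≤ ‖cols A S‖ := by
  have h : col A j = cols A S *ᵥ Pi.single ⟨j, hj⟩ 1 := by
    funext i; simp [col, cols]
  simpa [h, l2_single] using l2_mulVec_le (cols A S) (Pi.single ⟨j, hj⟩ 1)

lemma norm_cols_le_of_subset [Fintype κ] [DecidableEq κ] (A : Matrix ι κ 𝕜) {J S : Finset κ}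
    (hJS : J ⊆ S) : ‖cols A J‖ ≤ ‖cols A S‖ :=
  norm_le_of_l2_mulVec_le (norm_nonneg _) fun c => by
    have hc : Function.support (extendZero J c) ⊆ S :=
      (support_extendZero_subset J c).trans (Finset.coe_subset.mpr hJS)
    calc l2 (cols A J *ᵥ c) = l2 (cols A S *ᵥ fun j : S => extendZero J c j) := by
          rw [← mulVec_extendZero, ← mulVec_extendZero, extendZero_restrict hc]
      _ ≤ ‖cols A S‖ * l2 (fun j : S => extendZero J c j) := l2_mulVec_le _ _
      _ = ‖cols A S‖ * l2 c := by rw [l2_restrict, proj_eq_self hc, l2_extendZero]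

end Columns

section Restricted

variable {κ : Type*} [Fintype κ] [DecidableEq κ]

lemma one_sub_theta_succ_le_norm_apply_self (s : ℕ) (M : Matrix κ κ 𝕜) (j : κ) :
    1 - theta (s + 1) M ≤ ‖M j j‖ := by
  have hj : Function.support (Pi.single j (1 : 𝕜)) ⊆ ({j} : Finset κ) := by
    simp
  have h := norm_dotProduct_mulVec_sub_le_theta (s + 1) M (by simp) hj hj
  simp [l2_single] at h
  linarith [norm_sub_norm_le (1 : 𝕜) (M j j), norm_sub_rev (1 : 𝕜) (M j j), norm_one (α := 𝕜)]

lemma one_sub_theta_mul_l2_le (s : ℕ) (M : Matrix κ κ 𝕜) {J : Finset κ} (hJ : J.card ≤ s)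
    (c : J → 𝕜) : (1 - theta s M) * l2 c ≤ l2 (M.submatrix ((↑) : J → κ) ((↑) : J → κ) *ᵥ c) := by
  set G := M.submatrix ((↑) : J → κ) ((↑) : J → κ)
  have hGc : (fun j : J => (M *ᵥ extendZero J c - extendZero J c) j) = G *ᵥ c - c := by
    funext j
    rw [Pi.sub_apply, mulVec_extendZero, extendZero_apply_coe]
    rfl
  have h := l2_proj_mulVec_sub_le s M subset_rfl hJ (support_extendZero_subset J c)
  rw [← l2_restrict, hGc, l2_extendZero, ← l2_neg, neg_sub] at h
  have := l2_sub_le c (c - G *ᵥ c)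
  rw [sub_sub_cancel] at this
  linarith

lemma isUnit_det_submatrix_of_theta_lt_one {s : ℕ} {M : Matrix κ κ 𝕜} (hθ : theta s M < 1)
    {J : Finset κ} (hJ : J.card ≤ s) : IsUnit (M.submatrix ((↑) : J → κ) ((↑) : J → κ)).det := by
  rw [isUnit_iff_ne_zero]
  intro hdet
  obtain ⟨c, hc, hGc⟩ := exists_mulVec_eq_zero_iff.mpr hdet
  have h := one_sub_theta_mul_l2_le s M hJ c
  rw [hGc, l2_eq_zero.mpr rfl] at h
  exact hc (l2_eq_zero.mp (le_antisymm (nonpos_of_mul_nonpos_right h (by linarith)) (l2_nonneg c)))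

lemma norm_inv_submatrix_le {s : ℕ} {M : Matrix κ κ 𝕜} (hθ : theta s M < 1) {J : Finset κ}
    (hJ : J.card ≤ s) : ‖(M.submatrix ((↑) : J → κ) ((↑) : J → κ))⁻¹‖ ≤ (1 - theta s M)⁻¹ := by
  set G := M.submatrix ((↑) : J → κ) ((↑) : J → κ)
  have hθ' : 0 < 1 - theta s M := by linarith
  refine norm_le_of_l2_mulVec_le (inv_nonneg.mpr hθ'.le) fun e => ?_
  have h := one_sub_theta_mul_l2_le s M hJ (G⁻¹ *ᵥ e)
  rwa [mulVec_mulVec, mul_nonsing_inv _ (isUnit_det_submatrix_of_theta_lt_one hθ hJ),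
    one_mulVec, ← le_inv_mul_iff₀ hθ'] at h

end Restricted

section IdempotentNorm

variable {E : Type*} [NormedAddCommGroup E] [InnerProductSpace 𝕜 E]

lemma norm_sq_normSq_smul_sub_inner_smul (p q : E) :
    ‖((‖q‖ ^ 2 : ℝ) : 𝕜) • p - inner 𝕜 q p • q‖ ^ 2 =
      ‖q‖ ^ 2 * (‖q‖ ^ 2 * ‖p‖ ^ 2 - ‖inner 𝕜 q p‖ ^ 2) := by
  rw [norm_sub_sq (𝕜 := 𝕜), norm_smul, norm_smul, inner_smul_left, inner_smul_right,
    ← inner_conj_symm, RCLike.conj_ofReal, RCLike.norm_ofReal, abs_of_nonneg (by positivity)]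
  simp only [RCLike.conj_mul, RCLike.norm_conj]
  norm_cast
  ring

lemma norm_sub_apply_le_of_isIdempotentElem {P : E →L[𝕜] E} (hP : IsIdempotentElem P)
    {C : ℝ} (hC : 1 ≤ C) (hPC : ‖P‖ ≤ C) (v : E) : ‖v - P v‖ ≤ C * ‖v‖ := by
  set p := P v
  set q := v - p with hq
  have hPp : P p = p := congr($hP v)
  have hPq : P q = 0 := by rw [hq, map_sub, hPp]; exact sub_self p
  by_cases hp0 : p = 0
  · rw [hq, hp0, sub_zero]
    exact le_mul_of_one_le_left (norm_nonneg v) hC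
  set a := ‖q‖ ^ 2
  set c := inner 𝕜 q p
  -- `a⁻¹ • w` is the point of least norm on the line `p + 𝕜 q`, all of which `P` maps to `p`.
  set w := (a : 𝕜) • p - c • q
  have hPw : a * ‖p‖ ≤ C * ‖w‖ := by
    calc a * ‖p‖ = ‖P w‖ := by
          rw [show P w = (a : 𝕜) • p by simp [w, hPp, hPq], norm_smul, RCLike.norm_ofReal,
            abs_of_nonneg (by positivity)]
      _ ≤ C * ‖w‖ := (P.le_opNorm w).trans (by gcongr)
  have hw : ‖w‖ ^ 2 = a * (a * ‖p‖ ^ 2 - ‖c‖ ^ 2) := norm_sq_normSq_smul_sub_inner_smul p q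
  have hv : ‖v‖ ^ 2 = ‖p‖ ^ 2 + 2 * RCLike.re c + a := by
    rw [show v = p + q by simp [q], norm_add_sq (𝕜 := 𝕜), ← inner_conj_symm, RCLike.conj_re]
  have hc : RCLike.re c ^ 2 ≤ ‖c‖ ^ 2 := by
    rw [sq, ← RCLike.normSq_eq_def']
    exact RCLike.re_sq_le_normSq c
  have hp : 0 < ‖p‖ ^ 2 := by positivity
  have hkey : a * ‖p‖ ^ 2 - ‖c‖ ^ 2 ≤ ‖p‖ ^ 2 * ‖v‖ ^ 2 := by
    rw [hv]; nlinarith [sq_nonneg (‖p‖ ^ 2 + RCLike.re c)]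
  have ha : a ≤ (C * ‖v‖) ^ 2 := by
    rcases (show 0 ≤ a by positivity).eq_or_lt with ha0 | ha0
    · rw [← ha0]; positivity
    have h1 : a * (a * ‖p‖ ^ 2) ≤ a * (C ^ 2 * (a * ‖p‖ ^ 2 - ‖c‖ ^ 2)) := by
      nlinarith [pow_le_pow_left₀ (by positivity) hPw 2, hw]
    have h2 : ‖p‖ ^ 2 * a ≤ ‖p‖ ^ 2 * (C * ‖v‖) ^ 2 := by
      nlinarith [le_of_mul_le_mul_left h1 ha0, mul_le_mul_of_nonneg_left hkey (sq_nonneg C)]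
    exact le_of_mul_le_mul_left h2 hp
  exact (pow_le_pow_iff_left₀ (norm_nonneg q) (by positivity) two_ne_zero).mp ha

lemma norm_one_sub_le_of_isIdempotentElem {ι : Type*} [Fintype ι] [DecidableEq ι]
    {P : Matrix ι ι 𝕜} (hP : IsIdempotentElem P) {C : ℝ} (hC : 1 ≤ C) (hPC : ‖P‖ ≤ C) :
    ‖1 - P‖ ≤ C := by
  rw [← l2_opNorm_toEuclideanCLM, map_sub, map_one]
  exact ContinuousLinearMap.opNorm_le_bound _ (by linarith) fun v =>
    norm_sub_apply_le_of_isIdempotentElem (hP.map (toEuclideanCLM (𝕜 := 𝕜) (n := ι))) hC hPC v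

end IdempotentNorm

section Oblique

variable {ι κ : Type*} [Fintype ι] [DecidableEq κ]

def obliqueP (Ψ Ψt : Matrix ι κ 𝕜) (J : Finset κ) : Matrix ι ι 𝕜 :=
  cols Ψ J * ((cols Ψt J)ᴴ * cols Ψ J)⁻¹ * (cols Ψt J)ᴴ

lemma obliqueE_eq_one_sub_obliqueP [DecidableEq ι] (Ψ Ψt : Matrix ι κ 𝕜) (J : Finset κ) :
    obliqueE Ψ Ψt J = 1 - obliqueP Ψ Ψt J := rfl

variable {s : ℕ} {Ψ Ψt : Matrix ι κ 𝕜} {J : Finset κ}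

lemma isUnit_det_conjTranspose_cols_mul_cols [Fintype κ] (hθ : theta s (Ψtᴴ * Ψ) < 1)
    (hJ : J.card ≤ s) : IsUnit ((cols Ψt J)ᴴ * cols Ψ J).det := by
  rw [conjTranspose_cols_mul_cols]
  exact isUnit_det_submatrix_of_theta_lt_one hθ hJ

lemma isIdempotentElem_obliqueP (hG : IsUnit ((cols Ψt J)ᴴ * cols Ψ J).det) :
    IsIdempotentElem (obliqueP Ψ Ψt J) := by
  unfold IsIdempotentElem obliqueP
  simp only [Matrix.mul_assoc]
  rw [← Matrix.mul_assoc (cols Ψt J)ᴴ, mul_nonsing_inv_cancel_left _ _ hG]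

lemma conjTranspose_cols_mul_obliqueE [DecidableEq ι] (hG : IsUnit ((cols Ψt J)ᴴ * cols Ψ J).det) :
    (cols Ψt J)ᴴ * obliqueE Ψ Ψt J = 0 := by
  rw [obliqueE, Matrix.mul_sub, Matrix.mul_one, ← Matrix.mul_assoc, ← Matrix.mul_assoc,
    mul_nonsing_inv _ hG, Matrix.one_mul, sub_self]

lemma norm_obliqueP_le [DecidableEq ι] [Fintype κ] (hθ : theta s (Ψtᴴ * Ψ) < 1)
    (hJ : J.card ≤ s) {S : Finset κ} (hJS : J ⊆ S) :
    ‖obliqueP Ψ Ψt J‖ ≤ ‖cols Ψ S‖ * ‖cols Ψt S‖ / (1 - theta s (Ψtᴴ * Ψ)) := by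
  have hG := norm_inv_submatrix_le hθ hJ
  rw [← conjTranspose_cols_mul_cols] at hG
  calc ‖obliqueP Ψ Ψt J‖
      ≤ ‖cols Ψ J‖ * ‖((cols Ψt J)ᴴ * cols Ψ J)⁻¹‖ * ‖(cols Ψt J)ᴴ‖ :=
        (l2_opNorm_mul _ _).trans (by gcongr; exact l2_opNorm_mul _ _)
    _ ≤ ‖cols Ψ S‖ * (1 - theta s (Ψtᴴ * Ψ))⁻¹ * ‖cols Ψt S‖ := by
        rw [l2_opNorm_conjTranspose]
        gcongr
        exacts [norm_cols_le_of_subset Ψ hJS, norm_cols_le_of_subset Ψt hJS]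
    _ = ‖cols Ψ S‖ * ‖cols Ψt S‖ / (1 - theta s (Ψtᴴ * Ψ)) := by ring

lemma norm_obliqueE_le [DecidableEq ι] [Fintype κ] (hθ : theta (s + 1) (Ψtᴴ * Ψ) < 1)
    (hJ : J.card ≤ s + 1) {S : Finset κ} (hJS : J ⊆ S) {j : κ} (hj : j ∈ S) :
    ‖obliqueE Ψ Ψt J‖ ≤ ‖cols Ψ S‖ * ‖cols Ψt S‖ / (1 - theta (s + 1) (Ψtᴴ * Ψ)) := by
  have hθ' : 0 < 1 - theta (s + 1) (Ψtᴴ * Ψ) := by linarith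
  have hdiag : 1 - theta (s + 1) (Ψtᴴ * Ψ) ≤ ‖cols Ψ S‖ * ‖cols Ψt S‖ := by
    calc 1 - theta (s + 1) (Ψtᴴ * Ψ) ≤ ‖(Ψtᴴ * Ψ) j j‖ := one_sub_theta_succ_le_norm_apply_self s _ j
      _ ≤ l2 (col Ψt j) * l2 (col Ψ j) := by
        rw [conjTranspose_mul_apply_self]; exact norm_star_dotProduct_le _ _
      _ ≤ ‖cols Ψ S‖ * ‖cols Ψt S‖ := by
        rw [mul_comm]; gcongr; exacts [l2_nonneg _, l2_col_le Ψ hj, l2_col_le Ψt hj]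
  rw [obliqueE_eq_one_sub_obliqueP]
  exact norm_one_sub_le_of_isIdempotentElem
    (isIdempotentElem_obliqueP (isUnit_det_conjTranspose_cols_mul_cols hθ hJ))
    ((one_le_div hθ').mpr hdiag) (norm_obliqueP_le hθ hJ hJS)

end Oblique

section Signal

variable {ι κ : Type*} [Fintype ι] [DecidableEq ι] [Fintype κ] [DecidableEq κ]

lemma obliqueE_mulVec_mulVec (Ψ Ψt : Matrix ι κ 𝕜) (J : Finset κ) (x : κ → 𝕜) :
    obliqueE Ψ Ψt J *ᵥ (Ψ *ᵥ x) = Ψ *ᵥ (x - extendZero J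
      (((cols Ψt J)ᴴ * cols Ψ J)⁻¹ *ᵥ ((cols Ψt J)ᴴ *ᵥ (Ψ *ᵥ x)))) := by
  rw [mulVec_sub, mulVec_extendZero, obliqueE, sub_mulVec, one_mulVec, ← mulVec_mulVec,
    ← mulVec_mulVec]

lemma norm_star_col_dotProduct_obliqueE_mulVec_sub_le {s : ℕ} {Ψ Ψt : Matrix ι κ 𝕜}
    (hθ : theta (s + 1) (Ψtᴴ * Ψ) < 1) {S J : Finset κ} (hS : S.card ≤ s) (hJS : J ⊆ S)
    {x : κ → 𝕜} (hx : Function.support x ⊆ S) {t : κ} (ht : t ∉ J) :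
    ‖star (col Ψt t) ⬝ᵥ obliqueE Ψ Ψt J *ᵥ (Ψ *ᵥ x) - x t‖ ≤
      theta (s + 1) (Ψtᴴ * Ψ) * l2 (proj (S \ J) x) := by
  have hJ : J.card ≤ s + 1 := (Finset.card_le_card hJS).trans (hS.trans s.le_succ)
  set x' := x - extendZero J (((cols Ψt J)ᴴ * cols Ψ J)⁻¹ *ᵥ ((cols Ψt J)ᴴ *ᵥ (Ψ *ᵥ x)))
  have hoff : ∀ i ∉ J, x' i = x i := fun i hi => by
    simp [x', extendZero_apply_of_notMem _ hi]
  have hx' : Function.support x' ⊆ S := fun i hi => by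
    by_cases hiJ : i ∈ J
    · exact hJS hiJ
    · exact hx (by rwa [Function.mem_support, hoff i hiJ] at hi)
  have hMx' : ∀ j ∈ J, ((Ψtᴴ * Ψ) *ᵥ x') j = 0 := fun j hj => by
    have h := congr_fun (congr_arg (· *ᵥ (Ψ *ᵥ x))
      (conjTranspose_cols_mul_obliqueE (isUnit_det_conjTranspose_cols_mul_cols hθ hJ))) ⟨j, hj⟩
    simp only [← mulVec_mulVec, obliqueE_mulVec_mulVec, zero_mulVec] at h
    rw [← mulVec_mulVec]
    exact h
  have hproj : proj (S \ J) x' = proj (S \ J) x := funext fun i => by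
    by_cases hi : i ∈ S \ J
    · simp [proj, hi, hoff i (Finset.mem_sdiff.mp hi).2]
    · simp [proj, hi]
  rw [star_col_dotProduct, obliqueE_mulVec_mulVec, mulVec_mulVec, ← hoff t ht, ← hproj]
  exact norm_mulVec_apply_sub_le hθ.le hJS hS hx' hMx' ht

lemma norm_star_col_dotProduct_obliqueE_sub_le {s : ℕ} {Ψ Ψt : Matrix ι κ 𝕜}
    (hθ : theta (s + 1) (Ψtᴴ * Ψ) < 1) {S J : Finset κ} (hS : S.card ≤ s) (hJS : J ⊆ S)
    {j : κ} (hj : j ∈ S) {x : κ → 𝕜} (hx : Function.support x ⊆ S) (z : ι → 𝕜) {t : κ}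
    (ht : t ∉ J) :
    ‖star (col Ψt t) ⬝ᵥ obliqueE Ψ Ψt J *ᵥ (Ψ *ᵥ x + z) - x t‖ ≤
      theta (s + 1) (Ψtᴴ * Ψ) * l2 (proj (S \ J) x) + l2 (col Ψt t) *
        (‖cols Ψ S‖ * ‖cols Ψt S‖ / (1 - theta (s + 1) (Ψtᴴ * Ψ)) * l2 z) := by
  rw [mulVec_add, dotProduct_add, add_sub_right_comm]
  refine (norm_add_le _ _).trans (add_le_add
    (norm_star_col_dotProduct_obliqueE_mulVec_sub_le hθ hS hJS hx ht) ?_)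
  refine (norm_star_dotProduct_le _ _).trans (mul_le_mul_of_nonneg_left
    ((l2_mulVec_le _ _).trans ?_) (l2_nonneg _))
  have hJ : J.card ≤ s + 1 := (Finset.card_le_card hJS).trans (hS.trans s.le_succ)
  exact mul_le_mul_of_nonneg_right (norm_obliqueE_le hθ hJ hJS hj) (l2_nonneg z)

end Signal

theorem statement6_general (m n s : ℕ) (Ψ Ψt : Matrix (Fin m) (Fin n) 𝕜)
    (xstar : Fin n → 𝕜) (Jstar : Finset (Fin n))
    (hsupp : ∀ i, xstar i ≠ 0 ↔ i ∈ Jstar) (hcard : Jstar.card ≤ s)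
    (z y : Fin m → 𝕜) (hy : y = Ψ.mulVec xstar + z)
    (J : Finset (Fin n)) (hJsub : J ⊆ Jstar)
    (hθ : theta (s + 1) (Ψtᴴ * Ψ) < 1)
    (hgap : (⨆ i, ‖proj (Jstar \ J) xstar i‖)
          - 2 * theta (s + 1) (Ψtᴴ * Ψ) * l2 (proj (Jstar \ J) xstar)
        > specNorm (cols Ψ Jstar) * specNorm (cols Ψt Jstar)
            / (1 - theta (s + 1) (Ψtᴴ * Ψ))
            * (2 * (⨆ j, l2 (col Ψt j)) * l2 z)) :
    ∀ k, k ∉ Jstar →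
      ∃ j ∈ Jstar \ J,
        ‖star (col Ψt k) ⬝ᵥ (obliqueE Ψ Ψt J).mulVec y‖ <
          ‖star (col Ψt j) ⬝ᵥ (obliqueE Ψ Ψt J).mulVec y‖ := by
  intro k hk
  subst hy
  rw [specNorm_eq_norm, specNorm_eq_norm] at hgap
  set θ := theta (s + 1) (Ψtᴴ * Ψ)
  set u := proj (Jstar \ J) xstar
  set μ := ⨆ j, l2 (col Ψt j)
  set C := ‖cols Ψ Jstar‖ * ‖cols Ψt Jstar‖ / (1 - θ)
  set η := θ * l2 u + μ * (C * l2 z)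
  have hμ : ∀ t, l2 (col Ψt t) ≤ μ := le_ciSup (Set.finite_range _).bddAbove
  have hC0 : 0 ≤ C := div_nonneg (by positivity) (by linarith)
  have hη : 0 ≤ η := add_nonneg (mul_nonneg (theta_nonneg _ _) (l2_nonneg _))
    (mul_nonneg ((l2_nonneg _).trans (hμ k)) (mul_nonneg hC0 (l2_nonneg _)))
  have : Nonempty (Fin n) := ⟨k⟩
  obtain ⟨i, hi⟩ := exists_eq_ciSup_of_finite (f := fun i => ‖u i‖)
  have hui : 2 * η < ‖u i‖ := by rw [hi]; linarith
  have hiJ : i ∈ Jstar \ J := by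
    by_contra h
    simp [u, proj, h] at hui
    linarith
  have hclose : ∀ t ∉ J,
      ‖star (col Ψt t) ⬝ᵥ obliqueE Ψ Ψt J *ᵥ (Ψ *ᵥ xstar + z) - xstar t‖ ≤ η := fun t ht =>
    (norm_star_col_dotProduct_obliqueE_sub_le hθ hcard hJsub (Finset.mem_sdiff.mp hiJ).1
      (fun i hi => (hsupp i).mp hi) z ht).trans
        (add_le_add le_rfl (mul_le_mul_of_nonneg_right (hμ t) (mul_nonneg hC0 (l2_nonneg _))))
  refine ⟨i, hiJ, ?_⟩
  have hk0 : xstar k = 0 := by by_contra h; exact hk ((hsupp k).mp h)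
  have hDk := hclose k fun h => hk (hJsub h)
  have hDi := (norm_le_norm_add_norm_sub _ (xstar i)).trans
    (add_le_add le_rfl (hclose i (Finset.mem_sdiff.mp hiJ).2))
  rw [hk0, sub_zero] at hDk
  rw [show u i = xstar i by simp [u, proj, hiJ]] at hui
  linarith

/-- a single step of Oblique Matching Pursuit selects an element of `J* \ J`. -/
theorem statement6 (m n s : ℕ) (Ψ Ψt : Matrix (Fin m) (Fin n) 𝕜)
    (xstar : Fin n → 𝕜) (Jstar : Finset (Fin n))
    (hsupp : ∀ i, xstar i ≠ 0 ↔ i ∈ Jstar) (hcard : Jstar.card ≤ s)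
    (z y : Fin m → 𝕜) (hy : y = Ψ.mulVec xstar + z)
    (J : Finset (Fin n)) (hJsub : J ⊆ Jstar) (hJne : J ≠ Jstar)
    (hθ : theta (s + 1) (Ψtᴴ * Ψ) < 1)
    (hgap : (⨆ i, ‖proj (Jstar \ J) xstar i‖)
          - 2 * theta (s + 1) (Ψtᴴ * Ψ) * l2 (proj (Jstar \ J) xstar)
        > specNorm (cols Ψ Jstar) * specNorm (cols Ψt Jstar)
            / (1 - theta (s + 1) (Ψtᴴ * Ψ))
            * (2 * (⨆ j, l2 (col Ψt j)) * l2 z)) :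
    ∀ k, k ∉ Jstar →
      ∃ j ∈ Jstar \ J,
        ‖star (col Ψt k) ⬝ᵥ (obliqueE Ψ Ψt J).mulVec y‖ <
          ‖star (col Ψt j) ⬝ᵥ (obliqueE Ψ Ψt J).mulVec y‖ :=
  statement6_general m n s Ψ Ψt xstar Jstar hsupp hcard z y hy J hJsub hθ hgap

end ObliquePursuit
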